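/- (Bellman function lemma for the embedding condition) There is an absolute constant C > 0 such that for every weight w (with w^{-1} locally integrable) and every dyadic interval J: (1/|J|) ∑_{I ∈ D(J)} |I| ⟨w⟩_I^{1/4} ⟨w^{-1}⟩_I^{1/4} ( (|Δ_{I₊}w| + |Δ_{I₋}w|)/⟨w⟩_I )² ≤ C ⟨w⟩_J^{1/4} ⟨w^{-1}⟩_J^{1/4}. Consequently, if w ∈ A₂^d, then (1/|J|) ∑_{I ∈ D(J)} |I| ⟨w⟩_I ⟨w^{-1}⟩_I ( (|Δ_{I₊}w| + |Δ_{I₋}w|)/⟨w⟩_I )² ≤ C [w]_{A₂^d}. -/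

import Mathlib

open MeasureTheory Set

/-- A dyadic interval `[k·2⁻ⁿ, (k+1)·2⁻ⁿ)`. -/
structure DyadicI where
  n : ℤ
  k : ℤ

namespace DyadicI

noncomputable def len (I : DyadicI) : ℝ := (2:ℝ) ^ (-I.n)

noncomputable def left (I : DyadicI) : ℝ := I.k * I.len

noncomputable def set (I : DyadicI) : Set ℝ := Set.Ico I.left (I.left + I.len)

/-- left half -/
def minus (I : DyadicI) : DyadicI := ⟨I.n + 1, 2 * I.k⟩

/-- right half -/
def plus (I : DyadicI) : DyadicI := ⟨I.n + 1, 2 * I.k + 1⟩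

/-- dyadic parent -/
def parent (I : DyadicI) : DyadicI := ⟨I.n - 1, Int.fdiv I.k 2⟩

/-- `w(I) = ∫_I w` -/
noncomputable def intg (w : ℝ → ℝ) (I : DyadicI) : ℝ := ∫ x in I.set, w x

/-- `⟨w⟩_I = |I|⁻¹ ∫_I w` -/
noncomputable def avg (w : ℝ → ℝ) (I : DyadicI) : ℝ := (∫ x in I.set, w x) / I.len

/-- Haar function `h_I = |I|^{-1/2}(χ_{I₊} - χ_{I₋})` -/
noncomputable def haar (I : DyadicI) : ℝ → ℝ := fun x =>
  (1 / Real.sqrt I.len) *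
    (I.plus.set.indicator (fun _ => (1:ℝ)) x - I.minus.set.indicator (fun _ => (1:ℝ)) x)

/-- weighted Haar function `h^w_I` -/
noncomputable def whaar (w : ℝ → ℝ) (I : DyadicI) : ℝ → ℝ := fun x =>
  (1 / Real.sqrt (intg w I)) *
    (Real.sqrt (intg w I.minus / intg w I.plus) * I.plus.set.indicator (fun _ => (1:ℝ)) x
      - Real.sqrt (intg w I.plus / intg w I.minus) * I.minus.set.indicator (fun _ => (1:ℝ)) x)

/-- `Δ_I w = (⟨w⟩_{I₊} − ⟨w⟩_{I₋})/2` -/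
noncomputable def del (w : ℝ → ℝ) (I : DyadicI) : ℝ := (avg w I.plus - avg w I.minus) / 2

end DyadicI

/-- weighted inner product `⟨f,g⟩_w = ∫ f g w` -/
noncomputable def wip (w f g : ℝ → ℝ) : ℝ := ∫ x, f x * g x * w x

/-- a weight: locally integrable and positive a.e. -/
def IsWeight (w : ℝ → ℝ) : Prop :=
  MeasureTheory.LocallyIntegrable w ∧ ∀ᵐ x ∂(volume : Measure ℝ), 0 < w x

noncomputable def winv (w : ℝ → ℝ) : ℝ → ℝ := fun x => (w x)⁻¹

/-- membership in dyadic A₂ -/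
def MemA2d (w : ℝ → ℝ) : Prop :=
  BddAbove (Set.range fun I : DyadicI => DyadicI.avg w I * DyadicI.avg (winv w) I)

/-- the dyadic A₂ characteristic `[w]_{A₂^d}` -/
noncomputable def A2d (w : ℝ → ℝ) : ℝ :=
  ⨆ I : DyadicI, DyadicI.avg w I * DyadicI.avg (winv w) I

/-- the dyadic BMO norm -/
noncomputable def bmoD (b : ℝ → ℝ) : ℝ :=
  ⨆ I : DyadicI, (∫ x in I.set, |b x - DyadicI.avg b I|) / I.len

/-- membership in dyadic BMO -/
def MemBMOd (b : ℝ → ℝ) : Prop :=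
  BddAbove (Set.range fun I : DyadicI => (∫ x in I.set, |b x - DyadicI.avg b I|) / I.len)

/-!
The Bellman function `B(u, v) = u^{1/4} v^{1/4}` is concave, and strictly so in `u`: splitting
`u` into `u (1 ± t)` costs a factor `1 - t²/16` (Cauchy–Schwarz and
`√(1 + t) + √(1 - t) ≤ 2 - t²/4`). Running this over two generations, and using that a child
of `I` has `B ≤ √2 B_I`, gives for `B_I = B(⟨w⟩_I, ⟨w⁻¹⟩_I)`
`B_I ((|Δ_{I₊}w| + |Δ_{I₋}w|) / ⟨w⟩_I)² ≤ 512 (B_I - mean of B over the grandchildren of I)`.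
After multiplication by `|I|` the right-hand sides telescope over `D(J)` against the potential
`512 |I| (B_I + mean of B over the children of I) ≤ 1024 |I| B_I`.
For `w ∈ A₂^d` one has `⟨w⟩_I ⟨w⁻¹⟩_I ≤ [w]^{3/4} B_I` and `B_J ≤ [w]^{1/4}`; intervals on which
`w⁻¹` is not integrable contribute nothing and are split further.
-/

noncomputable def bellman (u v : ℝ) : ℝ := √√u * √√v

lemma bellman_nonneg (u v : ℝ) : 0 ≤ bellman u v := by unfold bellman; positivity

lemma bellman_mono {u u' v v' : ℝ} (hu : u ≤ u') (hv : v ≤ v') : bellman u v ≤ bellman u' v' :=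
  mul_le_mul (Real.sqrt_le_sqrt (Real.sqrt_le_sqrt hu)) (Real.sqrt_le_sqrt (Real.sqrt_le_sqrt hv))
    (by positivity) (by positivity)

lemma bellman_eq_sqrt_mul (u v : ℝ) : bellman u v = √(√u * √v) :=
  (Real.sqrt_mul (Real.sqrt_nonneg u) _).symm

lemma bellman_eq_sqrt_sqrt_mul {u : ℝ} (hu : 0 ≤ u) (v : ℝ) : bellman u v = √√(u * v) := by
  rw [bellman, Real.sqrt_mul hu, Real.sqrt_mul (Real.sqrt_nonneg u)]

lemma bellman_two_mul (u v : ℝ) : bellman (2 * u) (2 * v) = √2 * bellman u v := by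
  have h2 : √√2 * √√2 = √2 := Real.mul_self_sqrt (Real.sqrt_nonneg 2)
  simp only [bellman, Real.sqrt_mul zero_le_two, Real.sqrt_mul (Real.sqrt_nonneg 2)]
  linear_combination (√√u * √√v) * h2

lemma sqrt_sqrt_eq_rpow {x : ℝ} (hx : 0 ≤ x) : √√x = x ^ (1 / 4 : ℝ) := by
  rw [Real.sqrt_eq_rpow, Real.sqrt_eq_rpow, ← Real.rpow_mul hx]
  norm_num

lemma bellman_eq_rpow {u v : ℝ} (hu : 0 ≤ u) (hv : 0 ≤ v) :
    bellman u v = u ^ (1 / 4 : ℝ) * v ^ (1 / 4 : ℝ) := by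
  rw [bellman, sqrt_sqrt_eq_rpow hu, sqrt_sqrt_eq_rpow hv]

lemma bellman_eq_mul_rpow {u v : ℝ} (hu : 0 ≤ u) (hv : 0 ≤ v) :
    bellman u v = (u * v) ^ (1 / 4 : ℝ) := by
  rw [bellman_eq_sqrt_sqrt_mul hu, sqrt_sqrt_eq_rpow (mul_nonneg hu hv)]

lemma sqrt_add_sqrt_le {a b : ℝ} (ha : 0 ≤ a) (hb : 0 ≤ b) : √a + √b ≤ 2 * √((a + b) / 2) := by
  rw [← Real.sqrt_sq (by positivity : (0:ℝ) ≤ √a + √b), show (2:ℝ) = √4 by norm_num,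
    ← Real.sqrt_mul (by norm_num)]
  apply Real.sqrt_le_sqrt
  nlinarith [sq_nonneg (√a - √b), Real.sq_sqrt ha, Real.sq_sqrt hb]

lemma sqrt_one_add_add_sqrt_one_sub_le {t : ℝ} (ht : t ^ 2 ≤ 1) :
    √(1 + t) + √(1 - t) ≤ 2 - t ^ 2 / 4 := by
  have ht' : -1 ≤ t ∧ t ≤ 1 := abs_le.1 (abs_le_one_iff_mul_self_le_one.2 (by nlinarith))
  have ha := Real.sq_sqrt (show 0 ≤ 1 + t by linarith)
  have hb := Real.sq_sqrt (show 0 ≤ 1 - t by linarith)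
  have hab : √(1 + t) * √(1 - t) ≤ 1 - t ^ 2 / 2 := by
    rw [← Real.sqrt_mul (by linarith), Real.sqrt_le_left (by nlinarith)]
    nlinarith [sq_nonneg (t ^ 2)]
  nlinarith [Real.sqrt_nonneg (1 + t), Real.sqrt_nonneg (1 - t), sq_nonneg (t ^ 2),
    sq_nonneg (√(1 + t) + √(1 - t) - (2 - t ^ 2 / 4))]

lemma sqrt_mul_add_sqrt_mul_le {a b c d : ℝ} (ha : 0 ≤ a) (hb : 0 ≤ b) (hc : 0 ≤ c) (hd : 0 ≤ d) :
    √(a * c) + √(b * d) ≤ √(a + b) * √(c + d) := by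
  rw [Real.sqrt_mul ha, Real.sqrt_mul hb, ← Real.sqrt_mul (add_nonneg ha hb) (c + d)]
  apply Real.le_sqrt_of_sq_le
  nlinarith [sq_nonneg (√a * √d - √b * √c), Real.sq_sqrt ha, Real.sq_sqrt hb, Real.sq_sqrt hc,
    Real.sq_sqrt hd]

lemma bellman_mul_add_bellman_mul_le {U t v₁ v₂ : ℝ} (hU : 0 ≤ U) (ht : t ^ 2 ≤ 1)
    (hv₁ : 0 ≤ v₁) (hv₂ : 0 ≤ v₂) :
    bellman (U * (1 + t)) v₁ + bellman (U * (1 - t)) v₂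
      ≤ 2 * (1 - t ^ 2 / 16) * bellman U ((v₁ + v₂) / 2) := by
  have hu : √(U * (1 + t)) + √(U * (1 - t)) ≤ (2 - t ^ 2 / 4) * √U := by
    rw [Real.sqrt_mul hU, Real.sqrt_mul hU, ← mul_add, mul_comm]
    exact mul_le_mul_of_nonneg_right (sqrt_one_add_add_sqrt_one_sub_le ht) (Real.sqrt_nonneg U)
  have hc : √((2 - t ^ 2 / 4) * 2) ≤ 2 * (1 - t ^ 2 / 16) := by
    rw [Real.sqrt_le_left (by nlinarith)]
    nlinarith [sq_nonneg (t ^ 2)]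
  calc bellman (U * (1 + t)) v₁ + bellman (U * (1 - t)) v₂
      ≤ √(√(U * (1 + t)) + √(U * (1 - t))) * √(√v₁ + √v₂) := by
        simp only [bellman_eq_sqrt_mul]
        exact sqrt_mul_add_sqrt_mul_le (by positivity) (by positivity) (by positivity)
          (by positivity)
    _ ≤ √((2 - t ^ 2 / 4) * √U) * √(2 * √((v₁ + v₂) / 2)) :=
        mul_le_mul (Real.sqrt_le_sqrt hu) (Real.sqrt_le_sqrt (sqrt_add_sqrt_le hv₁ hv₂))
          (Real.sqrt_nonneg _) (Real.sqrt_nonneg _)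
    _ = √((2 - t ^ 2 / 4) * 2) * bellman U ((v₁ + v₂) / 2) := by
        rw [Real.sqrt_mul (by nlinarith), Real.sqrt_mul zero_le_two, Real.sqrt_mul (by nlinarith),
          bellman]
        ring
    _ ≤ 2 * (1 - t ^ 2 / 16) * bellman U ((v₁ + v₂) / 2) :=
        mul_le_mul_of_nonneg_right hc (bellman_nonneg _ _)

lemma bellman_add_bellman_le {u₁ u₂ v₁ v₂ : ℝ} (hu₁ : 0 < u₁) (hu₂ : 0 < u₂)
    (hv₁ : 0 ≤ v₁) (hv₂ : 0 ≤ v₂) :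
    bellman u₁ v₁ + bellman u₂ v₂
      ≤ 2 * (1 - ((u₁ - u₂) / (u₁ + u₂)) ^ 2 / 16) * bellman ((u₁ + u₂) / 2) ((v₁ + v₂) / 2) := by
  have ht : ((u₁ - u₂) / (u₁ + u₂)) ^ 2 ≤ 1 := by
    rw [div_pow, div_le_one (by positivity)]
    nlinarith
  have h := bellman_mul_add_bellman_mul_le (by positivity : 0 ≤ (u₁ + u₂) / 2) ht hv₁ hv₂
  rwa [show (u₁ + u₂) / 2 * (1 + (u₁ - u₂) / (u₁ + u₂)) = u₁ by field_simp; ring,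
    show (u₁ + u₂) / 2 * (1 - (u₁ - u₂) / (u₁ + u₂)) = u₂ by field_simp; ring] at h

lemma bellman_add_bellman_le_two_mul {u₁ u₂ v₁ v₂ : ℝ} (hu₁ : 0 < u₁) (hu₂ : 0 < u₂)
    (hv₁ : 0 ≤ v₁) (hv₂ : 0 ≤ v₂) :
    bellman u₁ v₁ + bellman u₂ v₂ ≤ 2 * bellman ((u₁ + u₂) / 2) ((v₁ + v₂) / 2) := by
  refine (bellman_add_bellman_le hu₁ hu₂ hv₁ hv₂).trans ?_
  have := bellman_nonneg ((u₁ + u₂) / 2) ((v₁ + v₂) / 2)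
  nlinarith [sq_nonneg ((u₁ - u₂) / (u₁ + u₂))]

lemma mul_sq_add_mul_le_gain {B x y a b p r : ℝ} (hB : 0 ≤ B) (hx : 0 ≤ x) (hy : 0 ≤ y)
    (ha : a ∈ Icc (0 : ℝ) 1) (hb : b ∈ Icc (0 : ℝ) 1) (hp : 0 ≤ p) (hr : 0 ≤ r)
    (hpr : p + r = 2) (hxy : x + y ≤ 2 * B) (hxB : x ≤ 1.42 * B) (hyB : y ≤ 1.42 * B) :
    B * (a * p + b * r) ^ 2 ≤ 512 * (B - (x + y) / 2 + (a ^ 2 * x + b ^ 2 * y) / 32) := by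
  -- If both `x, y ≥ B/2`, the term `a²x + b²y` pays; otherwise `x + y` stays below `2B` by a
  -- fixed margin `0.08 B`.
  obtain ⟨ha₀, ha₁⟩ := ha
  obtain ⟨hb₀, hb₁⟩ := hb
  by_cases hbig : B / 2 ≤ x ∧ B / 2 ≤ y
  · have hsq : (a * p + b * r) ^ 2 ≤ 8 * (a ^ 2 + b ^ 2) := by
      nlinarith [sq_nonneg (a * p - b * r), mul_le_mul_of_nonneg_left
        (show p ^ 2 ≤ 4 by nlinarith) (sq_nonneg a), mul_le_mul_of_nonneg_left
        (show r ^ 2 ≤ 4 by nlinarith) (sq_nonneg b)]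
    nlinarith [mul_le_mul_of_nonneg_left hsq hB, mul_le_mul_of_nonneg_left hbig.1 (sq_nonneg a),
      mul_le_mul_of_nonneg_left hbig.2 (sq_nonneg b)]
  · have hsq : (a * p + b * r) ^ 2 ≤ 4 := by
      have : a * p + b * r ≤ 2 := by nlinarith
      nlinarith [mul_nonneg ha₀ hp, mul_nonneg hb₀ hr]
    have hgap : B - (x + y) / 2 ≥ 0.04 * B := by
      rw [not_and_or, not_le, not_le] at hbig
      rcases hbig with h | h <;> linarith
    nlinarith [mul_le_mul_of_nonneg_left hsq hB]

lemma bellman_mul_sq_le_gain {up um vp vm a b : ℝ} (hup : 0 < up) (hum : 0 < um)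
    (hvp : 0 ≤ vp) (hvm : 0 ≤ vm) (ha : a ∈ Icc (0 : ℝ) 1) (hb : b ∈ Icc (0 : ℝ) 1) :
    bellman ((up + um) / 2) ((vp + vm) / 2) * ((a * up + b * um) / ((up + um) / 2)) ^ 2
      ≤ 512 * (bellman ((up + um) / 2) ((vp + vm) / 2)
        - ((1 - a ^ 2 / 16) * bellman up vp + (1 - b ^ 2 / 16) * bellman um vm) / 2) := by
  set u := (up + um) / 2 with hu_def
  set v := (vp + vm) / 2 with hv_def
  have hu : 0 < u := by positivity
  have hsqrt2 : √2 ≤ 1.42 := Real.sqrt_le_iff.2 ⟨by norm_num, by norm_num⟩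
  have hB := bellman_nonneg u v
  have hchild {u' v'} (hu' : u' ≤ 2 * u) (hv' : v' ≤ 2 * v) : bellman u' v' ≤ 1.42 * bellman u v :=
    calc bellman u' v' ≤ bellman (2 * u) (2 * v) := bellman_mono hu' hv'
      _ = √2 * bellman u v := bellman_two_mul u v
      _ ≤ 1.42 * bellman u v := mul_le_mul_of_nonneg_right hsqrt2 hB
  have hmain := mul_sq_add_mul_le_gain hB (bellman_nonneg up vp) (bellman_nonneg um vm) ha hb
    (div_pos hup hu).le (div_pos hum hu).le (by field_simp; ring)
    (bellman_add_bellman_le_two_mul hup hum hvp hvm)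
    (hchild (by linarith) (by linarith)) (hchild (by linarith) (by linarith))
  rw [show (a * up + b * um) / u = a * (up / u) + b * (um / u) by ring]
  linarith

lemma abs_sub_div_add_mem_Icc {x y : ℝ} (hx : 0 < x) (hy : 0 < y) :
    |x - y| / (x + y) ∈ Icc (0 : ℝ) 1 :=
  ⟨by positivity, (div_le_one (by positivity)).2 (abs_le.2 ⟨by linarith, by linarith⟩)⟩

lemma bellman_two_level {u₁ u₂ u₃ u₄ v₁ v₂ v₃ v₄ u v : ℝ}
    (hu₁ : 0 < u₁) (hu₂ : 0 < u₂) (hu₃ : 0 < u₃) (hu₄ : 0 < u₄)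
    (hv₁ : 0 ≤ v₁) (hv₂ : 0 ≤ v₂) (hv₃ : 0 ≤ v₃) (hv₄ : 0 ≤ v₄)
    (hu : u = ((u₁ + u₂) / 2 + (u₃ + u₄) / 2) / 2) (hv : v = ((v₁ + v₂) / 2 + (v₃ + v₄) / 2) / 2) :
    bellman u v * ((|u₁ - u₂| / 2 + |u₃ - u₄| / 2) / u) ^ 2
      ≤ 512 * (bellman u v
        - (bellman u₁ v₁ + bellman u₂ v₂ + bellman u₃ v₃ + bellman u₄ v₄) / 4) := by
  subst hu hv
  have h₁₂ := bellman_add_bellman_le hu₁ hu₂ hv₁ hv₂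
  have h₃₄ := bellman_add_bellman_le hu₃ hu₄ hv₃ hv₄
  rw [← sq_abs, abs_div, abs_of_pos (add_pos hu₁ hu₂)] at h₁₂
  rw [← sq_abs, abs_div, abs_of_pos (add_pos hu₃ hu₄)] at h₃₄
  have hgain := bellman_mul_sq_le_gain (by positivity : 0 < (u₁ + u₂) / 2)
    (by positivity : 0 < (u₃ + u₄) / 2) (by positivity : 0 ≤ (v₁ + v₂) / 2)
    (by positivity : 0 ≤ (v₃ + v₄) / 2) (abs_sub_div_add_mem_Icc hu₁ hu₂)
    (abs_sub_div_add_mem_Icc hu₃ hu₄)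
  rw [show |u₁ - u₂| / (u₁ + u₂) * ((u₁ + u₂) / 2) = |u₁ - u₂| / 2 by field_simp,
    show |u₃ - u₄| / (u₃ + u₄) * ((u₃ + u₄) / 2) = |u₃ - u₄| / 2 by field_simp] at hgain
  linarith

lemma mul_le_rpow_mul_bellman {u v A : ℝ} (hu : 0 ≤ u) (hv : 0 ≤ v) (hA : u * v ≤ A) :
    u * v ≤ A ^ (3 / 4 : ℝ) * bellman u v := by
  have huv := mul_nonneg hu hv
  calc u * v = (u * v) ^ (3 / 4 : ℝ) * (u * v) ^ (1 / 4 : ℝ) := by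
        rw [← Real.rpow_add' huv (by norm_num)]; norm_num
    _ ≤ A ^ (3 / 4 : ℝ) * bellman u v := by
        rw [bellman_eq_mul_rpow hu hv]
        gcongr

lemma bellman_le_rpow {u v A : ℝ} (hu : 0 ≤ u) (hv : 0 ≤ v) (hA : u * v ≤ A) :
    bellman u v ≤ A ^ (1 / 4 : ℝ) := by
  rw [bellman_eq_mul_rpow hu hv]
  exact Real.rpow_le_rpow (mul_nonneg hu hv) hA (by norm_num)

namespace DyadicI

lemma len_pos (I : DyadicI) : 0 < I.len := zpow_pos two_pos _

lemma len_minus (I : DyadicI) : I.minus.len = I.len / 2 := by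
  rw [len, len, minus, neg_add, zpow_add₀ two_ne_zero, zpow_neg_one, div_eq_mul_inv]

lemma len_plus (I : DyadicI) : I.plus.len = I.len / 2 := I.len_minus

lemma len_eq_two_pow_mul_len {I J : DyadicI} (h : I.n ≤ J.n) :
    I.len = 2 ^ (J.n - I.n).toNat * J.len := by
  rw [len, len, ← zpow_natCast, Int.toNat_of_nonneg (by omega), ← zpow_add₀ two_ne_zero]
  ring_nf

lemma left_minus (I : DyadicI) : I.minus.left = I.left := by
  rw [left, left, len_minus, minus]
  push_cast
  ring

lemma left_plus (I : DyadicI) : I.plus.left = I.left + I.len / 2 := by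
  rw [left, left, len_plus, plus]
  push_cast
  ring

lemma set_minus (I : DyadicI) : I.minus.set = Ico I.left (I.left + I.len / 2) := by
  rw [set, left_minus, len_minus]

lemma set_plus (I : DyadicI) : I.plus.set = Ico (I.left + I.len / 2) (I.left + I.len) := by
  rw [set, left_plus, len_plus, add_assoc, add_halves]

lemma subset_iff {I J : DyadicI} :
    I.set ⊆ J.set ↔ J.left ≤ I.left ∧ I.left + I.len ≤ J.left + J.len :=
  Ico_subset_Ico_iff (by linarith [I.len_pos])

lemma minus_subset (I : DyadicI) : I.minus.set ⊆ I.set := by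
  rw [set_minus]; exact Ico_subset_Ico_right (by linarith [I.len_pos])

lemma plus_subset (I : DyadicI) : I.plus.set ⊆ I.set := by
  rw [set_plus]; exact Ico_subset_Ico_left (by linarith [I.len_pos])

lemma disjoint_minus_plus (I : DyadicI) : Disjoint I.minus.set I.plus.set := by
  rw [set_minus, set_plus]; exact Ico_disjoint_Ico_same

lemma minus_union_plus (I : DyadicI) : I.minus.set ∪ I.plus.set = I.set := by
  rw [set_minus, set_plus]
  exact Ico_union_Ico_eq_Ico (by linarith [I.len_pos]) (by linarith [I.len_pos])

lemma n_le_of_subset {I J : DyadicI} (h : I.set ⊆ J.set) : J.n ≤ I.n := by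
  have hlen : I.len ≤ J.len := by linarith [subset_iff.1 h]
  rw [len, len, zpow_le_zpow_iff_right₀ one_lt_two] at hlen
  omega

lemma eq_of_subset_of_n_le {I J : DyadicI} (h : I.set ⊆ J.set) (hn : I.n ≤ J.n) : I = J := by
  have hn : I.n = J.n := le_antisymm hn (n_le_of_subset h)
  have hlen : I.len = J.len := by rw [len, len, hn]
  have hk : (I.k : ℝ) * J.len = J.k * J.len := by
    have := subset_iff.1 h
    rw [left, left, hlen] at this
    linarith
  have hk : I.k = J.k := by exact_mod_cast mul_right_cancel₀ J.len_pos.ne' hk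
  cases I; cases J
  simp_all

lemma subset_minus_or_subset_plus {I J : DyadicI} (h : I.set ⊆ J.set) (hn : J.n < I.n) :
    I.set ⊆ J.minus.set ∨ I.set ⊆ J.plus.set := by
  -- the midpoint of `J` is a point of the grid of generation `I.n`, hence not interior to `I`
  set M : ℤ := (2 * J.k + 1) * 2 ^ (I.n - J.plus.n).toNat
  have hmid : J.left + J.len / 2 = M * I.len := by
    rw [← left_plus, left, len_eq_two_pow_mul_len (show J.plus.n ≤ I.n by simp [plus]; omega)]
    simp only [M, plus]
    push_cast
    ring
  have hleft : I.left = I.k * I.len := rfl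
  have hJ := subset_iff.1 h
  rw [set_minus, set_plus, set, Ico_subset_Ico_iff (by linarith [I.len_pos]),
    Ico_subset_Ico_iff (by linarith [I.len_pos])]
  rcases lt_or_ge I.k M with hk | hk
  · have hk : (I.k : ℝ) + 1 ≤ M := by exact_mod_cast hk
    exact Or.inl ⟨hJ.1, by nlinarith [I.len_pos]⟩
  · have hk : (M : ℝ) ≤ I.k := by exact_mod_cast hk
    exact Or.inr ⟨by nlinarith [I.len_pos], hJ.2⟩

open Classical in
noncomputable def subtree : DyadicI → ℕ → Finset DyadicI
  | _, 0 => ∅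
  | J, N + 1 => insert J (subtree J.minus N ∪ subtree J.plus N)

lemma mem_subtree {I J : DyadicI} {N : ℕ} (h : I.set ⊆ J.set) (hn : I.n < J.n + N) :
    I ∈ J.subtree N := by
  classical
  induction N generalizing J with
  | zero => have := n_le_of_subset h; omega
  | succ N ih =>
    rw [subtree, Finset.mem_insert, Finset.mem_union]
    rcases le_or_gt I.n J.n with hle | hlt
    · exact Or.inl (eq_of_subset_of_n_le h hle)
    · have hn' : I.n < J.n + 1 + N := by push_cast at hn; omega
      rcases subset_minus_or_subset_plus h hlt with h' | h'
      · exact Or.inr (Or.inl (ih h' hn'))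
      · exact Or.inr (Or.inr (ih h' hn'))

lemma sum_subtree_succ_le {f : DyadicI → ℝ} (hf : ∀ I, 0 ≤ f I) (J : DyadicI) (N : ℕ) :
    ∑ I ∈ J.subtree (N + 1), f I
      ≤ f J + ∑ I ∈ J.minus.subtree N, f I + ∑ I ∈ J.plus.subtree N, f I := by
  classical
  have hunion (s t : Finset DyadicI) : ∑ I ∈ s ∪ t, f I ≤ ∑ I ∈ s, f I + ∑ I ∈ t, f I := by
    rw [← Finset.sum_union_inter]
    exact le_add_of_nonneg_right (Finset.sum_nonneg fun I _ => hf I)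
  calc ∑ I ∈ J.subtree (N + 1), f I
      ≤ ∑ I ∈ {J}, f I + ∑ I ∈ J.minus.subtree N ∪ J.plus.subtree N, f I := by
        rw [subtree, Finset.insert_eq]; exact hunion _ _
    _ ≤ f J + (∑ I ∈ J.minus.subtree N, f I + ∑ I ∈ J.plus.subtree N, f I) := by
        rw [Finset.sum_singleton]; gcongr; exact hunion _ _
    _ = _ := by ring

lemma sum_subtree_le_of_step {f E : DyadicI → ℝ} {G : DyadicI → Prop} (hf : ∀ I, 0 ≤ f I)
    (hE : ∀ I, 0 ≤ E I) (hG : ∀ I, G I → G I.minus ∧ G I.plus)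
    (hstep : ∀ I, G I → f I + E I.minus + E I.plus ≤ E I) (N : ℕ) {J : DyadicI} (hJ : G J) :
    ∑ I ∈ J.subtree N, f I ≤ E J := by
  induction N generalizing J with
  | zero => simpa [subtree] using hE J
  | succ N ih =>
    calc ∑ I ∈ J.subtree (N + 1), f I
        ≤ f J + ∑ I ∈ J.minus.subtree N, f I + ∑ I ∈ J.plus.subtree N, f I :=
          sum_subtree_succ_le hf J N
      _ ≤ f J + E J.minus + E J.plus := by gcongr; exacts [ih (hG J hJ).1, ih (hG J hJ).2]
      _ ≤ E J := hstep J hJ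

lemma sum_subtree_le_of_stopping {f : DyadicI → ℝ} {G : DyadicI → Prop} {c : ℝ}
    (hf : ∀ I, 0 ≤ f I) (hc : 0 ≤ c)
    (hgood : ∀ J, G J → ∀ N, ∑ I ∈ J.subtree N, f I ≤ c * J.len)
    (hbad : ∀ I, ¬ G I → f I = 0) (N : ℕ) (J : DyadicI) :
    ∑ I ∈ J.subtree N, f I ≤ c * J.len := by
  induction N generalizing J with
  | zero => simpa [subtree] using mul_nonneg hc J.len_pos.le
  | succ N ih =>
    by_cases hJ : G J
    · exact hgood J hJ _
    calc ∑ I ∈ J.subtree (N + 1), f I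
        ≤ f J + ∑ I ∈ J.minus.subtree N, f I + ∑ I ∈ J.plus.subtree N, f I :=
          sum_subtree_succ_le hf J N
      _ ≤ 0 + c * J.minus.len + c * J.plus.len := by
          rw [hbad J hJ]; gcongr; exacts [ih J.minus, ih J.plus]
      _ = c * J.len := by rw [len_minus, len_plus]; ring

lemma one_div_len_mul_tsum_le {f : DyadicI → ℝ} (hf : ∀ I, 0 ≤ f I) {J : DyadicI} {c : ℝ}
    (h : ∀ N, ∑ I ∈ J.subtree N, f I ≤ c * J.len) :
    1 / J.len * ∑' I : {I : DyadicI // I.set ⊆ J.set}, f I.1 ≤ c := by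
  rw [one_div_mul_eq_div, div_le_iff₀ J.len_pos]
  refine tsum_le_of_sum_le' (by simpa [subtree] using h 0) fun s => ?_
  set N := s.sup (fun I => (I.1.n - J.n).toNat) + 1
  calc ∑ I ∈ s, f I.1 = ∑ I ∈ s.map (Function.Embedding.subtype _), f I := by
        rw [Finset.sum_map]; rfl
    _ ≤ ∑ I ∈ J.subtree N, f I := by
        refine Finset.sum_le_sum_of_subset_of_nonneg ?_ fun I _ _ => hf I
        intro I hI
        obtain ⟨I, hIs, rfl⟩ := Finset.mem_map.1 hI
        show I.1 ∈ _
        have hdepth := Finset.le_sup (f := fun I : {I : DyadicI // I.set ⊆ J.set} =>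
          (I.1.n - J.n).toNat) hIs
        have := n_le_of_subset I.2
        exact mem_subtree I.2 (by simp only [N] at hdepth ⊢; push_cast; omega)
    _ ≤ c * J.len := h N

lemma integrableOn_set {f : ℝ → ℝ} (hf : LocallyIntegrable f volume) (I : DyadicI) :
    IntegrableOn f I.set volume :=
  (hf.integrableOn_isCompact isCompact_Icc).mono_set Ico_subset_Icc_self

lemma avg_eq_half_add {f : ℝ → ℝ} {I : DyadicI} (hf : IntegrableOn f I.set volume) :
    avg f I = (avg f I.minus + avg f I.plus) / 2 := by
  have hsplit : ∫ x in I.set, f x = (∫ x in I.minus.set, f x) + ∫ x in I.plus.set, f x := by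
    rw [← minus_union_plus I]
    exact setIntegral_union I.disjoint_minus_plus measurableSet_Ico
      (hf.mono_set I.minus_subset) (hf.mono_set I.plus_subset)
  rw [avg, avg, avg, hsplit, len_minus, len_plus]
  field_simp [I.len_pos.ne']

lemma avg_nonneg {f : ℝ → ℝ} (hf : 0 ≤ᵐ[volume] f) (I : DyadicI) : 0 ≤ avg f I :=
  div_nonneg (integral_nonneg_of_ae (ae_restrict_of_ae hf)) I.len_pos.le

lemma avg_pos {f : ℝ → ℝ} {I : DyadicI} (hf : IntegrableOn f I.set volume)
    (hpos : ∀ᵐ x, 0 < f x) : 0 < avg f I := by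
  refine div_pos ?_ I.len_pos
  rw [integral_pos_iff_support_of_nonneg_ae (ae_restrict_of_ae (hpos.mono fun _ h => h.le)) hf]
  have hsupp : Function.support f =ᵐ[volume.restrict I.set] (univ : Set ℝ) :=
    ae_eq_univ.2 (ae_restrict_of_ae (hpos.mono fun _ h => h.ne'))
  rw [measure_congr hsupp, Measure.restrict_apply_univ, set, Real.volume_Ico]
  simp [I.len_pos]

lemma avg_eq_zero_of_not_integrableOn {f : ℝ → ℝ} {I : DyadicI}
    (hf : ¬ IntegrableOn f I.set volume) : avg f I = 0 := by
  rw [avg, integral_undef hf, zero_div]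

end DyadicI

open DyadicI

namespace IsWeight

variable {w : ℝ → ℝ}

lemma winv_pos (hw : IsWeight w) : ∀ᵐ x, 0 < winv w x := hw.2.mono fun _ h => inv_pos.2 h

lemma avg_pos (hw : IsWeight w) (I : DyadicI) : 0 < avg w I :=
  DyadicI.avg_pos (integrableOn_set hw.1 I) hw.2

lemma avg_winv_nonneg (hw : IsWeight w) (I : DyadicI) : 0 ≤ avg (winv w) I :=
  avg_nonneg (hw.winv_pos.mono fun _ h => h.le) I

end IsWeight

noncomputable def bellmanAt (w : ℝ → ℝ) (I : DyadicI) : ℝ := bellman (avg w I) (avg (winv w) I)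

noncomputable def osc (w : ℝ → ℝ) (I : DyadicI) : ℝ :=
  ((|del w I.plus| + |del w I.minus|) / avg w I) ^ 2

noncomputable def bellmanPotential (w : ℝ → ℝ) (I : DyadicI) : ℝ :=
  512 * I.len * (bellmanAt w I + (bellmanAt w I.minus + bellmanAt w I.plus) / 2)

section Weight

variable {w : ℝ → ℝ}

lemma len_mul_bellmanAt_mul_osc_nonneg (w : ℝ → ℝ) (I : DyadicI) :
    0 ≤ I.len * bellmanAt w I * osc w I :=
  mul_nonneg (mul_nonneg I.len_pos.le (bellman_nonneg _ _)) (sq_nonneg _)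

lemma bellmanPotential_nonneg (w : ℝ → ℝ) (I : DyadicI) : 0 ≤ bellmanPotential w I := by
  unfold bellmanPotential bellmanAt
  have := I.len_pos
  have := bellman_nonneg (avg w I) (avg (winv w) I)
  have := bellman_nonneg (avg w I.minus) (avg (winv w) I.minus)
  have := bellman_nonneg (avg w I.plus) (avg (winv w) I.plus)
  positivity

lemma bellmanAt_minus_add_plus_le (hw : IsWeight w) {I : DyadicI}
    (hv : IntegrableOn (winv w) I.set volume) :
    bellmanAt w I.minus + bellmanAt w I.plus ≤ 2 * bellmanAt w I := by
  simp only [bellmanAt]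
  rw [avg_eq_half_add (integrableOn_set hw.1 I), avg_eq_half_add hv]
  exact bellman_add_bellman_le_two_mul (hw.avg_pos _) (hw.avg_pos _) (hw.avg_winv_nonneg _)
    (hw.avg_winv_nonneg _)

lemma bellmanPotential_le (hw : IsWeight w) {I : DyadicI}
    (hv : IntegrableOn (winv w) I.set volume) :
    bellmanPotential w I ≤ 1024 * I.len * bellmanAt w I := by
  have := bellmanAt_minus_add_plus_le hw hv
  rw [bellmanPotential]
  nlinarith [I.len_pos]

lemma len_mul_bellmanAt_mul_osc_add_le (hw : IsWeight w) {I : DyadicI}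
    (hv : IntegrableOn (winv w) I.set volume) :
    I.len * bellmanAt w I * osc w I + bellmanPotential w I.minus + bellmanPotential w I.plus
      ≤ bellmanPotential w I := by
  have hvm := hv.mono_set I.minus_subset
  have hvp := hv.mono_set I.plus_subset
  have hkey := bellman_two_level (u := avg w I) (v := avg (winv w) I)
    (hw.avg_pos I.minus.minus) (hw.avg_pos I.minus.plus)
    (hw.avg_pos I.plus.minus) (hw.avg_pos I.plus.plus) (hw.avg_winv_nonneg I.minus.minus)
    (hw.avg_winv_nonneg I.minus.plus) (hw.avg_winv_nonneg I.plus.minus)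
    (hw.avg_winv_nonneg I.plus.plus)
    (by rw [avg_eq_half_add (integrableOn_set hw.1 I),
      avg_eq_half_add (integrableOn_set hw.1 I.minus),
      avg_eq_half_add (integrableOn_set hw.1 I.plus)])
    (by rw [avg_eq_half_add hv, avg_eq_half_add hvm, avg_eq_half_add hvp])
  have hdel : |del w I.plus| + |del w I.minus|
      = |avg w I.minus.minus - avg w I.minus.plus| / 2
        + |avg w I.plus.minus - avg w I.plus.plus| / 2 := by
    rw [del, del, abs_div, abs_div, abs_two, abs_sub_comm (avg w I.plus.plus),
      abs_sub_comm (avg w I.minus.plus)]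
    ring
  have hmul := mul_le_mul_of_nonneg_left hkey I.len_pos.le
  rw [← hdel] at hmul
  simp only [bellmanPotential, bellmanAt, osc, len_minus, len_plus] at hmul ⊢
  linarith

theorem sum_subtree_len_mul_bellmanAt_mul_osc_le (hw : IsWeight w) {J : DyadicI}
    (hv : IntegrableOn (winv w) J.set volume) (N : ℕ) :
    ∑ I ∈ J.subtree N, I.len * bellmanAt w I * osc w I ≤ 1024 * J.len * bellmanAt w J :=
  (sum_subtree_le_of_step (G := fun I => IntegrableOn (winv w) I.set volume)
    (len_mul_bellmanAt_mul_osc_nonneg w) (bellmanPotential_nonneg w)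
    (fun I hI => ⟨hI.mono_set I.minus_subset, hI.mono_set I.plus_subset⟩)
    (fun _ hI => len_mul_bellmanAt_mul_osc_add_le hw hI) N hv).trans
    (bellmanPotential_le hw hv)

lemma avg_mul_avg_winv_le_A2d (hA : MemA2d w) (I : DyadicI) :
    avg w I * avg (winv w) I ≤ A2d w :=
  le_ciSup hA I

lemma A2d_nonneg (hw : IsWeight w) (hA : MemA2d w) : 0 ≤ A2d w :=
  (mul_nonneg (hw.avg_pos ⟨0, 0⟩).le (hw.avg_winv_nonneg _)).trans
    (avg_mul_avg_winv_le_A2d hA _)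

lemma len_mul_avg_mul_avg_mul_osc_le (hw : IsWeight w) (hA : MemA2d w) (I : DyadicI) :
    I.len * avg w I * avg (winv w) I * osc w I
      ≤ A2d w ^ (3 / 4 : ℝ) * (I.len * bellmanAt w I * osc w I) := by
  have h := mul_le_rpow_mul_bellman (hw.avg_pos I).le (hw.avg_winv_nonneg I)
    (avg_mul_avg_winv_le_A2d hA I)
  have := mul_nonneg I.len_pos.le (sq_nonneg ((|del w I.plus| + |del w I.minus|) / avg w I))
  rw [bellmanAt, osc]
  nlinarith

lemma sum_subtree_len_mul_bellmanAt_mul_osc_le_of_memA2d (hw : IsWeight w) (hA : MemA2d w)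
    (N : ℕ) (J : DyadicI) :
    ∑ I ∈ J.subtree N, I.len * bellmanAt w I * osc w I ≤ 1024 * A2d w ^ (1 / 4 : ℝ) * J.len := by
  have hA0 := A2d_nonneg hw hA
  refine sum_subtree_le_of_stopping (G := fun I => IntegrableOn (winv w) I.set volume)
    (len_mul_bellmanAt_mul_osc_nonneg w) (by positivity) (fun P hP N => ?_) (fun I hI => ?_) N J
  · have := bellman_le_rpow (hw.avg_pos P).le (hw.avg_winv_nonneg P) (avg_mul_avg_winv_le_A2d hA P)
    have := sum_subtree_len_mul_bellmanAt_mul_osc_le hw hP N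
    rw [bellmanAt] at *
    nlinarith [P.len_pos]
  -- Where `w⁻¹` is not integrable, `⟨w⁻¹⟩_I` is the junk value `0` and the summand vanishes.
  · simp [bellmanAt, avg_eq_zero_of_not_integrableOn hI, bellman]

lemma sum_subtree_len_mul_avg_mul_avg_mul_osc_le (hw : IsWeight w) (hA : MemA2d w) (N : ℕ)
    (J : DyadicI) :
    ∑ I ∈ J.subtree N, I.len * avg w I * avg (winv w) I * osc w I ≤ 1024 * A2d w * J.len := by
  have hA0 := A2d_nonneg hw hA
  calc ∑ I ∈ J.subtree N, I.len * avg w I * avg (winv w) I * osc w I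
      ≤ A2d w ^ (3 / 4 : ℝ) * ∑ I ∈ J.subtree N, I.len * bellmanAt w I * osc w I := by
        rw [Finset.mul_sum]
        exact Finset.sum_le_sum fun I _ => len_mul_avg_mul_avg_mul_osc_le hw hA I
    _ ≤ A2d w ^ (3 / 4 : ℝ) * (1024 * A2d w ^ (1 / 4 : ℝ) * J.len) := by
        gcongr; exact sum_subtree_len_mul_bellmanAt_mul_osc_le_of_memA2d hw hA N J
    _ = 1024 * (A2d w ^ (3 / 4 : ℝ) * A2d w ^ (1 / 4 : ℝ)) * J.len := by ring
    _ = 1024 * A2d w * J.len := by rw [← Real.rpow_add' hA0 (by norm_num)]; norm_num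

end Weight

theorem tsum_bellman_embedding_le (w : ℝ → ℝ) (hw : IsWeight w)
    (hv : LocallyIntegrable (winv w)) (J : DyadicI) :
    (1 / J.len) * ∑' I : {I : DyadicI // I.set ⊆ J.set},
        I.1.len * avg w I.1 ^ ((1:ℝ)/4) * avg (winv w) I.1 ^ ((1:ℝ)/4) *
          ((|del w I.1.plus| + |del w I.1.minus|) / avg w I.1) ^ 2
      ≤ 1024 * avg w J ^ ((1:ℝ)/4) * avg (winv w) J ^ ((1:ℝ)/4) := by
  have hbellman (I : DyadicI) :
      avg w I ^ ((1:ℝ)/4) * avg (winv w) I ^ ((1:ℝ)/4) = bellmanAt w I :=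
    (bellman_eq_rpow (hw.avg_pos I).le (hw.avg_winv_nonneg I)).symm
  rw [mul_assoc 1024, hbellman]
  calc _ = 1 / J.len * ∑' I : {I : DyadicI // I.set ⊆ J.set},
          I.1.len * bellmanAt w I.1 * osc w I.1 := by
        congr 1
        exact tsum_congr fun I => by rw [← hbellman, osc]; ring
    _ ≤ 1024 * bellmanAt w J :=
        one_div_len_mul_tsum_le (len_mul_bellmanAt_mul_osc_nonneg w) fun N =>
          (sum_subtree_len_mul_bellmanAt_mul_osc_le hw (integrableOn_set hv J) N).trans_eq
            (by ring)

theorem tsum_A2_embedding_le (w : ℝ → ℝ) (hw : IsWeight w) (hA : MemA2d w) (J : DyadicI) :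
    (1 / J.len) * ∑' I : {I : DyadicI // I.set ⊆ J.set},
        I.1.len * avg w I.1 * avg (winv w) I.1 *
          ((|del w I.1.plus| + |del w I.1.minus|) / avg w I.1) ^ 2
      ≤ 1024 * A2d w :=
  one_div_len_mul_tsum_le (f := fun I => I.len * avg w I * avg (winv w) I * osc w I)
    (fun I => mul_nonneg (mul_nonneg (mul_nonneg I.len_pos.le (hw.avg_pos I).le)
      (hw.avg_winv_nonneg I)) (sq_nonneg _))
    (sum_subtree_len_mul_avg_mul_avg_mul_osc_le hw hA · J)

/-- the Bellman function lemma for the embedding condition, and its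
`A₂^d` consequence. -/
theorem stmt19 : ∃ C > (0:ℝ),
    (∀ w : ℝ → ℝ, IsWeight w → MeasureTheory.LocallyIntegrable (winv w) → ∀ J : DyadicI,
      (1 / J.len) * ∑' I : {I : DyadicI // I.set ⊆ J.set},
          I.1.len * DyadicI.avg w I.1 ^ ((1:ℝ)/4) * DyadicI.avg (winv w) I.1 ^ ((1:ℝ)/4) *
            ((|DyadicI.del w I.1.plus| + |DyadicI.del w I.1.minus|) / DyadicI.avg w I.1) ^ 2
        ≤ C * DyadicI.avg w J ^ ((1:ℝ)/4) * DyadicI.avg (winv w) J ^ ((1:ℝ)/4)) ∧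
    (∀ w : ℝ → ℝ, IsWeight w → MemA2d w → ∀ J : DyadicI,
      (1 / J.len) * ∑' I : {I : DyadicI // I.set ⊆ J.set},
          I.1.len * DyadicI.avg w I.1 * DyadicI.avg (winv w) I.1 *
            ((|DyadicI.del w I.1.plus| + |DyadicI.del w I.1.minus|) / DyadicI.avg w I.1) ^ 2
        ≤ C * A2d w) :=
  ⟨1024, by norm_num, tsum_bellman_embedding_le, tsum_A2_embedding_le⟩
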